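/- arXiv:1111.4118 — 9 statements merged into one kernel-verified Lean document; each statement's English description precedes it below -/
import Mathlib

section
/- Let Φ be a real M×N matrix, y ∈ ℝ^M, λ > 0 and τ > 0. Let C : ℝ → ℝ be differentiable and T : ℝ → ℝ be differentiable with T′(x) ≥ 0 for all x ∈ ℝ, and suppose the cost–activation relation λ·C′(T(x)) = x − T(x) holds for all x ∈ ℝ. Suppose u : ℝ → ℝ^N is differentiable and satisfies the LCA dynamics τ·u′(t) = Φᵀy − u(t) − (ΦᵀΦ − I)·T(u(t)), where T is applied componentwise. Then for every t the map t ↦ E(T(u(t))) has derivative equal to −τ·Σ_{n=1}^{N} T′(u_n(t))·(u_n′(t))², which is ≤ 0; in particular the LCA trajectory never increases the energy E. -/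
/-!
The gradient of the energy is `∇E(a) = λ C'(a) - Φᵀ (y - Φ a)`. At `a = T(u)` the
cost–activation relation turns `λ C'(T u)` into `u - T u`, and the LCA dynamics then give
`∇E(T u) = -τ u'`. By the chain rule `dE/dt = ∇E(T u) ⬝ T'(u) u' = -τ ∑ T'(uₙ) uₙ'²`, which is
nonpositive because `T` is nondecreasing.
-/

open Matrix

noncomputable section

variable {ι κ : Type*} [Fintype ι] [Fintype κ]

def lcaEnergy (Φ : Matrix κ ι ℝ) (y : κ → ℝ) (lam : ℝ) (C : ℝ → ℝ) (a : ι → ℝ) : ℝ :=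
  (1/2) * ∑ m, (y m - (Φ *ᵥ a) m)^2 + lam * ∑ n, C (a n)

def lcaEnergyGrad (Φ : Matrix κ ι ℝ) (y : κ → ℝ) (lam : ℝ) (C : ℝ → ℝ) (a : ι → ℝ) : ι → ℝ :=
  lam • (fun n => deriv C (a n)) - Φᵀ *ᵥ (y - Φ *ᵥ a)

theorem HasDerivAt.matrix_mulVec (Φ : Matrix κ ι ℝ) {a : ℝ → ι → ℝ} {a' : ι → ℝ} {t : ℝ}
    (ha : HasDerivAt a a' t) : HasDerivAt (fun s => Φ *ᵥ a s) (Φ *ᵥ a') t :=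
  Φ.mulVecLin.toContinuousLinearMap.hasFDerivAt.comp_hasDerivAt t ha

theorem HasDerivAt.lcaEnergy (Φ : Matrix κ ι ℝ) (y : κ → ℝ) (lam : ℝ) {C : ℝ → ℝ}
    {a : ℝ → ι → ℝ} {a' : ι → ℝ} {t : ℝ} (ha : HasDerivAt a a' t)
    (hC : ∀ n, DifferentiableAt ℝ C (a t n)) :
    HasDerivAt (fun s => lcaEnergy Φ y lam C (a s)) (lcaEnergyGrad Φ y lam C (a t) ⬝ᵥ a') t := by
  have hres : HasDerivAt (fun s => y - Φ *ᵥ a s) (-(Φ *ᵥ a')) t := by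
    simpa using (ha.matrix_mulVec Φ).const_sub y
  have hfit := HasDerivAt.const_mul (1/2 : ℝ) (HasDerivAt.fun_sum (u := Finset.univ) fun m _ =>
    (hasDerivAt_pi.mp hres m).fun_pow 2)
  have hcost := HasDerivAt.const_mul lam (HasDerivAt.fun_sum (u := Finset.univ) fun n _ =>
    (hC n).hasDerivAt.comp t (hasDerivAt_pi.mp ha n))
  refine (hfit.fun_add hcost).congr_deriv ?_
  rw [lcaEnergyGrad, sub_dotProduct, smul_dotProduct, mulVec_transpose, ← dotProduct_mulVec]
  simp only [dotProduct, Finset.mul_sum, Pi.neg_apply, smul_eq_mul, mul_neg, Finset.sum_neg_distrib]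
  ring_nf

theorem lcaEnergyGrad_eq_neg_smul [DecidableEq ι] {Φ : Matrix κ ι ℝ} {y : κ → ℝ} {lam τ : ℝ}
    {C T : ℝ → ℝ} (hrel : ∀ x, lam * deriv C (T x) = x - T x) {u v : ι → ℝ}
    (hdyn : τ • v = Φᵀ *ᵥ y - u - (Φᵀ * Φ - 1) *ᵥ (fun n => T (u n))) :
    lcaEnergyGrad Φ y lam C (fun n => T (u n)) = -(τ • v) := by
  have hcost : lam • (fun n => deriv C (T (u n))) = u - fun n => T (u n) :=
    funext fun n => hrel (u n)
  rw [lcaEnergyGrad, hdyn, hcost, mulVec_sub, mulVec_mulVec, sub_mulVec, one_mulVec]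
  abel

theorem hasDerivAt_lcaEnergy_along_lca_flow [DecidableEq ι] {Φ : Matrix κ ι ℝ} {y : κ → ℝ}
    {lam τ : ℝ} {C T : ℝ → ℝ} (hrel : ∀ x, lam * deriv C (T x) = x - T x)
    {u : ℝ → ι → ℝ} {u' : ι → ℝ} {t : ℝ} (hu : HasDerivAt u u' t)
    (hC : ∀ n, DifferentiableAt ℝ C (T (u t n))) (hT : ∀ n, DifferentiableAt ℝ T (u t n))
    (hdyn : τ • u' = Φᵀ *ᵥ y - u t - (Φᵀ * Φ - 1) *ᵥ (fun n => T (u t n))) :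
    HasDerivAt (fun s => lcaEnergy Φ y lam C (fun n => T (u s n)))
      (-τ * ∑ n, deriv T (u t n) * u' n ^ 2) t := by
  have ha : HasDerivAt (fun s n => T (u s n)) (fun n => deriv T (u t n) * u' n) t :=
    hasDerivAt_pi.mpr fun n => (hT n).hasDerivAt.comp t (hasDerivAt_pi.mp hu n)
  refine (ha.lcaEnergy Φ y lam hC).congr_deriv ?_
  rw [lcaEnergyGrad_eq_neg_smul hrel hdyn, dotProduct, Finset.mul_sum]
  refine Finset.sum_congr rfl fun n _ => ?_
  simp only [Pi.neg_apply, Pi.smul_apply, smul_eq_mul]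
  ring

end

theorem lca_energy_decreasing_separable_general {M N : ℕ}
    (Φ : Matrix (Fin M) (Fin N) ℝ) (y : Fin M → ℝ)
    (lam τ : ℝ) (hτ : 0 < τ)
    (C T : ℝ → ℝ) (hC : Differentiable ℝ C) (hT : Differentiable ℝ T)
    (hT' : ∀ x : ℝ, 0 ≤ deriv T x)
    (hrel : ∀ x : ℝ, lam * deriv C (T x) = x - T x)
    (u : ℝ → Fin N → ℝ) (hu : Differentiable ℝ u)
    (hdyn : ∀ t : ℝ, τ • deriv u t =
      Φ.transpose *ᵥ y - u t - (Φ.transpose * Φ - 1) *ᵥ (fun n => T (u t n)))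
    (E : (Fin N → ℝ) → ℝ)
    (hE : ∀ a : Fin N → ℝ,
      E a = (1/2) * ∑ m, (y m - (Φ *ᵥ a) m)^2 + lam * ∑ n, C (a n)) :
    (∀ t : ℝ,
      HasDerivAt (fun s => E (fun n => T (u s n)))
        (-τ * ∑ n, deriv T (u t n) * (deriv u t n)^2) t ∧
      -τ * ∑ n, deriv T (u t n) * (deriv u t n)^2 ≤ 0) ∧
    Antitone (fun t => E (fun n => T (u t n))) := by
  obtain rfl : E = lcaEnergy Φ y lam C := funext hE
  have hderiv (t : ℝ) := hasDerivAt_lcaEnergy_along_lca_flow hrel (hu t).hasDerivAt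
    (fun _ => hC _) (fun _ => hT _) (hdyn t)
  have hnonpos (t : ℝ) : -τ * ∑ n, deriv T (u t n) * (deriv u t n)^2 ≤ 0 :=
    mul_nonpos_of_nonpos_of_nonneg (neg_nonpos.mpr hτ.le)
      (Finset.sum_nonneg fun n _ => mul_nonneg (hT' _) (sq_nonneg _))
  refine ⟨fun t => ⟨hderiv t, hnonpos t⟩, ?_⟩
  exact antitone_of_deriv_nonpos (fun t => (hderiv t).differentiableAt)
    fun t => (hderiv t).deriv ▸ hnonpos t

/-- For the LCA dynamics with a separable cost `C` and activation `T`
satisfying the cost–activation relation, the energy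
`E(a) = (1/2)‖y − Φa‖² + λ ∑ C(aₙ)` evaluated along the output trajectory
`a(t) = T(u(t))` has derivative `−τ ∑ T′(uₙ(t)) (uₙ′(t))² ≤ 0`; in particular the
energy never increases along the trajectory. -/
theorem lca_energy_decreasing_separable {M N : ℕ}
    (Φ : Matrix (Fin M) (Fin N) ℝ) (y : Fin M → ℝ)
    (lam τ : ℝ) (hlam : 0 < lam) (hτ : 0 < τ)
    (C T : ℝ → ℝ) (hC : Differentiable ℝ C) (hT : Differentiable ℝ T)
    (hT' : ∀ x : ℝ, 0 ≤ deriv T x)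
    (hrel : ∀ x : ℝ, lam * deriv C (T x) = x - T x)
    (u : ℝ → Fin N → ℝ) (hu : Differentiable ℝ u)
    (hdyn : ∀ t : ℝ, τ • deriv u t =
      Φ.transpose *ᵥ y - u t - (Φ.transpose * Φ - 1) *ᵥ (fun n => T (u t n)))
    (E : (Fin N → ℝ) → ℝ)
    (hE : ∀ a : Fin N → ℝ,
      E a = (1/2) * ∑ m, (y m - (Φ *ᵥ a) m)^2 + lam * ∑ n, C (a n)) :
    (∀ t : ℝ,
      HasDerivAt (fun s => E (fun n => T (u s n)))
        (-τ * ∑ n, deriv T (u t n) * (deriv u t n)^2) t ∧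
      -τ * ∑ n, deriv T (u t n) * (deriv u t n)^2 ≤ 0) ∧
    Antitone (fun t => E (fun n => T (u t n))) :=
  lca_energy_decreasing_separable_general Φ y lam τ hτ C T hC hT hT' hrel u hu hdyn E hE
end

section
/- Let Φ be a real M×N matrix, y ∈ ℝ^M, λ > 0 and τ > 0. Let C : ℝ^N → ℝ be differentiable and T : ℝ^N → ℝ^N be differentiable, and suppose the (possibly non-separable) cost–activation relation λ·∇C(T(x)) = x − T(x) holds for all x ∈ ℝ^N, and that the derivative DT(x) is positive semidefinite in the sense that ⟨v, DT(x)·v⟩ ≥ 0 for all x, v ∈ ℝ^N. Suppose u : ℝ → ℝ^N is differentiable and satisfies τ·u′(t) = Φᵀy − u(t) − (ΦᵀΦ − I)·T(u(t)). Then for every t the map t ↦ E(T(u(t))) has derivative equal to −τ·⟨u′(t), DT(u(t))·u′(t)⟩, which is ≤ 0. -/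
open Matrix

/-!
By the chain rule the derivative of `E (T (u t))` is `⟨∇E(a), a'⟩` with `a = T (u t)` and
`a' = DT(u t) u'`. The cost–activation relation turns `λ ∇C(a)` into `u − a`, so
`∇E(a) = −Φᵀ(y − Φa) + u − a`, which the LCA dynamics identify with `−τ u'`. Hence the derivative
is `−τ ⟨u', DT(u) u'⟩`, nonpositive since `DT` is positive semidefinite.
-/

theorem HasDerivAt.half_sum_sq_sub_mulVec {m n : Type*} [Fintype m] [Fintype n]
    (Φ : Matrix m n ℝ) (y : m → ℝ) {a : ℝ → n → ℝ} {a' : n → ℝ} {t : ℝ}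
    (ha : HasDerivAt a a' t) :
    HasDerivAt (fun s => (1/2) * ∑ i, (y i - (Φ *ᵥ a s) i) ^ 2)
      (-(Φᵀ *ᵥ (y - Φ *ᵥ a t)) ⬝ᵥ a') t := by
  have hres : HasDerivAt (fun s => y - Φ *ᵥ a s) (-(Φ *ᵥ a')) t := by
    simpa using ((Φ.mulVecLin.toContinuousLinearMap.hasFDerivAt).comp_hasDerivAt t ha).const_sub y
  refine ((HasDerivAt.fun_sum fun i (_ : i ∈ Finset.univ) =>
    ((hasDerivAt_pi.mp hres) i).fun_pow 2).const_mul (1/2 : ℝ)).congr_deriv ?_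
  rw [neg_dotProduct, mulVec_transpose, ← dotProduct_mulVec, Finset.mul_sum, dotProduct,
    ← Finset.sum_neg_distrib]
  refine Finset.sum_congr rfl fun i _ => ?_
  simp only [Pi.neg_apply, Pi.sub_apply]
  ring

theorem lca_energy_gradient_eq {m n : Type*} [Fintype m] [Fintype n] [DecidableEq n]
    (Φ : Matrix m n ℝ) (y : m → ℝ) (τ : ℝ) {u u' a : n → ℝ}
    (hdyn : τ • u' = Φᵀ *ᵥ y - u - (Φᵀ * Φ - 1) *ᵥ a) :
    -(Φᵀ *ᵥ (y - Φ *ᵥ a)) + (u - a) = -(τ • u') := by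
  rw [hdyn, sub_mulVec, one_mulVec, ← mulVec_mulVec, mulVec_sub]
  abel

theorem lca_energy_decreasing_nonseparable_general {M N : ℕ}
    (Φ : Matrix (Fin M) (Fin N) ℝ) (y : Fin M → ℝ)
    (lam τ : ℝ) (hτ : 0 < τ)
    (C : (Fin N → ℝ) → ℝ) (T : (Fin N → ℝ) → (Fin N → ℝ))
    (hC : Differentiable ℝ C) (hT : Differentiable ℝ T)
    (hrel : ∀ x v : Fin N → ℝ,
      lam * fderiv ℝ C (T x) v = ∑ n, (x n - T x n) * v n)
    (hpsd : ∀ x v : Fin N → ℝ, 0 ≤ ∑ n, v n * (fderiv ℝ T x v) n)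
    (u : ℝ → Fin N → ℝ) (hu : Differentiable ℝ u)
    (hdyn : ∀ t : ℝ, τ • deriv u t =
      Φ.transpose *ᵥ y - u t - (Φ.transpose * Φ - 1) *ᵥ T (u t))
    (E : (Fin N → ℝ) → ℝ)
    (hE : ∀ a : Fin N → ℝ,
      E a = (1/2) * ∑ m, (y m - (Φ *ᵥ a) m)^2 + lam * C a) :
    ∀ t : ℝ,
      HasDerivAt (fun s => E (T (u s)))
        (-τ * ∑ n, deriv u t n * (fderiv ℝ T (u t) (deriv u t)) n) t ∧
      -τ * ∑ n, deriv u t n * (fderiv ℝ T (u t) (deriv u t)) n ≤ 0 := by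
  intro t
  have ha : HasDerivAt (fun s => T (u s)) (fderiv ℝ T (u t) (deriv u t)) t :=
    (hT _).hasFDerivAt.comp_hasDerivAt t (hu t).hasDerivAt
  have hcost : HasDerivAt (fun s => lam * C (T (u s)))
      ((u t - T (u t)) ⬝ᵥ fderiv ℝ T (u t) (deriv u t)) t := by
    have := ((hC _).hasFDerivAt.comp_hasDerivAt t ha).const_mul lam
    rwa [hrel] at this
  have henergy := (ha.half_sum_sq_sub_mulVec Φ y).fun_add hcost
  rw [← add_dotProduct, lca_energy_gradient_eq Φ y τ (hdyn t), neg_dotProduct, smul_dotProduct,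
    smul_eq_mul, ← neg_mul] at henergy
  refine ⟨?_, mul_nonpos_of_nonpos_of_nonneg (by linarith) (hpsd _ _)⟩
  simp only [hE]
  exact henergy

/-- For the LCA dynamics with a (possibly non-separable) cost
`C : ℝ^N → ℝ` and activation `T : ℝ^N → ℝ^N` satisfying
`λ ∇C(T(x)) = x − T(x)` (stated against arbitrary directions `v`) and with the
derivative `DT(x)` positive semidefinite, the energy
`E(a) = (1/2)‖y − Φa‖² + λ C(a)` evaluated along `a(t) = T(u(t))` has derivative
`−τ ⟨u′(t), DT(u(t)) u′(t)⟩ ≤ 0`. -/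
theorem lca_energy_decreasing_nonseparable {M N : ℕ}
    (Φ : Matrix (Fin M) (Fin N) ℝ) (y : Fin M → ℝ)
    (lam τ : ℝ) (hlam : 0 < lam) (hτ : 0 < τ)
    (C : (Fin N → ℝ) → ℝ) (T : (Fin N → ℝ) → (Fin N → ℝ))
    (hC : Differentiable ℝ C) (hT : Differentiable ℝ T)
    (hrel : ∀ x v : Fin N → ℝ,
      lam * fderiv ℝ C (T x) v = ∑ n, (x n - T x n) * v n)
    (hpsd : ∀ x v : Fin N → ℝ, 0 ≤ ∑ n, v n * (fderiv ℝ T x v) n)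
    (u : ℝ → Fin N → ℝ) (hu : Differentiable ℝ u)
    (hdyn : ∀ t : ℝ, τ • deriv u t =
      Φ.transpose *ᵥ y - u t - (Φ.transpose * Φ - 1) *ᵥ T (u t))
    (E : (Fin N → ℝ) → ℝ)
    (hE : ∀ a : Fin N → ℝ,
      E a = (1/2) * ∑ m, (y m - (Φ *ᵥ a) m)^2 + lam * C a) :
    ∀ t : ℝ,
      HasDerivAt (fun s => E (T (u s)))
        (-τ * ∑ n, deriv u t n * (fderiv ℝ T (u t) (deriv u t)) n) t ∧
      -τ * ∑ n, deriv u t n * (fderiv ℝ T (u t) (deriv u t)) n ≤ 0 :=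
  lca_energy_decreasing_nonseparable_general Φ y lam τ hτ C T hC hT hrel hpsd u hu hdyn E hE
end

section
/- Let λ > 0 and u ∈ ℝ with |u| ≠ λ. Then the hard-thresholding value H_λ(u) (equal to 0 if |u| ≤ λ and equal to u if |u| > λ) is the unique minimizer over a ∈ ℝ of the function f(a) = (1/2)(u − a)² + (λ²/2)·𝟙[a ≠ 0], where 𝟙[a ≠ 0] equals 1 when a ≠ 0 and 0 when a = 0. -/
/-- For `λ > 0` and `u ∈ ℝ` with `|u| ≠ λ`, the hard-thresholding
value `H_λ(u)` (equal to `0` if `|u| ≤ λ` and to `u` otherwise) is the unique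
minimizer over `a ∈ ℝ` of `f(a) = (1/2)(u − a)² + (λ²/2)·𝟙[a ≠ 0]`. -/
theorem hardThreshold_unique_minimizer (lam : ℝ) (hlam : 0 < lam) (u : ℝ)
    (hne : |u| ≠ lam)
    (H : ℝ) (hH : H = if |u| ≤ lam then 0 else u) :
    ∀ a : ℝ, a ≠ H →
      (1/2) * (u - H)^2 + (lam^2/2) * (if H ≠ 0 then (1:ℝ) else 0) <
      (1/2) * (u - a)^2 + (lam^2/2) * (if a ≠ 0 then (1:ℝ) else 0) := by
  intro a ha
  by_cases hle : |u| ≤ lam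
  · have hH0 : H = 0 := by simp [hH, hle]
    have hlt : |u| < lam := lt_of_le_of_ne hle hne
    have hu2 : u^2 < lam^2 := by nlinarith [abs_nonneg u, sq_abs u]
    rw [hH0]
    rw [hH0] at ha
    simp only [ne_eq, not_true_eq_false, if_false, ha, not_false_eq_true, if_true]
    nlinarith [sq_nonneg (u - a)]
  · have hHu : H = u := by simp [hH, hle]
    have hgt : lam < |u| := lt_of_not_ge hle
    have hu2 : lam^2 < u^2 := by nlinarith [abs_nonneg u, sq_abs u]
    have hu0 : u ≠ 0 := by
      intro h; rw [h] at hgt; simp at hgt; linarith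
    rw [hHu]; rw [hHu] at ha
    simp only [hu0, ne_eq, not_false_eq_true, if_true]
    by_cases ha0 : a = 0
    · subst ha0; simp; nlinarith
    · simp only [ha0, ne_eq, not_false_eq_true, if_true]
      have h2 : (u - a)^2 > 0 := by
        have : u - a ≠ 0 := sub_ne_zero.mpr (Ne.symm ha)
        positivity
      nlinarith
end

section
/- Let λ > 0 and u ∈ ℝ. Then the family of log-barrier activation values T_γ(u) := (1/2)·(√((4 + γ(λ − u)²)/γ) − (λ − u)) converges, as γ → ∞, to max(u − λ, 0), which for u ≥ 0 equals the soft-thresholding value S_λ(u) restricted to nonnegative inputs. -/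
/-- For `λ > 0` and `u ∈ ℝ`, the log-barrier activation values
`T_γ(u) = (1/2)(√((4 + γ(λ − u)²)/γ) − (λ − u))` converge, as `γ → ∞`, to
`max (u − λ) 0`, the soft-thresholding value on nonnegative inputs. -/
theorem logBarrier_activation_tendsto_softThreshold (lam u : ℝ) (hlam : 0 < lam) :
    Filter.Tendsto
      (fun γ : ℝ => (1/2) * (Real.sqrt ((4 + γ * (lam - u)^2) / γ) - (lam - u)))
      Filter.atTop (nhds (max (u - lam) 0)) := by
  set a : ℝ := lam - u with ha
  have h0 : Filter.Tendsto (fun γ : ℝ => (4 + γ * a^2) / γ) Filter.atTop (nhds (a^2)) := by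
    have h4 : Filter.Tendsto (fun γ : ℝ => 4 / γ + a^2) Filter.atTop (nhds (0 + a^2)) := by
      exact (Filter.Tendsto.div_atTop tendsto_const_nhds Filter.tendsto_id).add tendsto_const_nhds
    rw [zero_add] at h4
    refine h4.congr' ?_
    filter_upwards [Filter.eventually_gt_atTop (0:ℝ)] with γ hγ
    field_simp
  have hsqrt : Filter.Tendsto (fun γ : ℝ => Real.sqrt ((4 + γ * a^2) / γ))
      Filter.atTop (nhds (|a|)) := by
    have := (Real.continuous_sqrt.continuousAt (x := a^2)).tendsto.comp h0
    rwa [Real.sqrt_sq_eq_abs] at this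
  have hfinal : Filter.Tendsto
      (fun γ : ℝ => (1/2) * (Real.sqrt ((4 + γ * a^2) / γ) - a))
      Filter.atTop (nhds ((1/2) * (|a| - a))) :=
    (hsqrt.sub tendsto_const_nhds).const_mul _
  have heq : (1/2 : ℝ) * (|a| - a) = max (u - lam) 0 := by
    rcases le_or_gt a 0 with h | h
    · rw [abs_of_nonpos h, max_eq_left (by simp [ha] at h ⊢; linarith)]
      simp [ha]; ring
    · rw [abs_of_pos h, max_eq_right (by simp [ha] at h ⊢; linarith)]
      ring
  rwa [heq] at hfinal
end

section
/- Let λ > 0 and u ≥ 0. With c = 2s, the approximate-ℓᵖ activation values T_s(u) := (1/2)·(u − s − 2sλ + √((u − s − 2sλ)² + 4us)) converge, as s → ∞, to u/(1 + 2λ), the linear amplifier activation corresponding to Tikhonov (ℓ²) regularization. -/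
/-- For `λ > 0` and `u ≥ 0`, with `c = 2s` the approximate-ℓᵖ
activation values `T_s(u) = (1/2)(u − s − 2sλ + √((u − s − 2sλ)² + 4us))`
converge, as `s → ∞`, to `u/(1 + 2λ)`, the linear (Tikhonov) activation. -/
theorem approx_lp_activation_tendsto_tikhonov (lam u : ℝ) (hlam : 0 < lam)
    (hu : 0 ≤ u) :
    Filter.Tendsto
      (fun s : ℝ => (1/2) * (u - s - 2 * s * lam +
        Real.sqrt ((u - s - 2 * s * lam)^2 + 4 * u * s)))
      Filter.atTop (nhds (u / (1 + 2 * lam))) := by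
  have hk : (0:ℝ) < 1 + 2 * lam := by linarith
  set k : ℝ := 1 + 2 * lam with hkdef
  have h0 : Filter.Tendsto (fun s : ℝ => u / s) Filter.atTop (nhds 0) :=
    Filter.Tendsto.div_atTop tendsto_const_nhds Filter.tendsto_id
  have hsub : Filter.Tendsto (fun s : ℝ => u / s - k) Filter.atTop (nhds (0 - k)) :=
    h0.sub tendsto_const_nhds
  have hden : Filter.Tendsto
      (fun s : ℝ => Real.sqrt ((u / s - k)^2 + 4 * (u / s)) - (u / s - k))
      Filter.atTop (nhds (Real.sqrt ((0 - k)^2 + 4 * 0) - (0 - k))) :=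
    (((hsub.pow 2).add (h0.const_mul 4)).sqrt).sub hsub
  have hval : Real.sqrt ((0 - k)^2 + 4 * 0) - (0 - k) = 2 * k := by
    rw [show ((0:ℝ) - k)^2 + 4 * 0 = k^2 by ring, Real.sqrt_sq hk.le]; ring
  rw [hval] at hden
  have hne : (2 * k : ℝ) ≠ 0 := by positivity
  have hg : Filter.Tendsto
      (fun s : ℝ => 2 * u / (Real.sqrt ((u / s - k)^2 + 4 * (u / s)) - (u / s - k)))
      Filter.atTop (nhds (u / k)) := by
    have h := (tendsto_const_nhds (x := (2*u:ℝ)) (f := Filter.atTop)).div hden hne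
    have : (2 * u) / (2 * k) = u / k := by
      field_simp
    rwa [this] at h
  refine Filter.Tendsto.congr' ?_ hg
  filter_upwards [Filter.eventually_gt_atTop (u / k), Filter.eventually_gt_atTop (0:ℝ)]
    with s hs1 hs0
  set A : ℝ := u - s - 2 * s * lam with hAdef
  have hAk : A = u - s * k := by rw [hAdef, hkdef]; ring
  have hAneg : A < 0 := by
    have : u < s * k := by
      have := (div_lt_iff₀ hk).mp hs1
      linarith
    rw [hAk]; linarith
  have hargnn : (0:ℝ) ≤ A^2 + 4 * u * s := by positivity
  set D : ℝ := Real.sqrt (A^2 + 4 * u * s) with hDdef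
  have hDnn : 0 ≤ D := Real.sqrt_nonneg _
  have hD2 : D^2 = A^2 + 4 * u * s := Real.sq_sqrt hargnn
  have hDA : 0 < D - A := by linarith
  have harg : (u / s - k)^2 + 4 * (u / s) = (A^2 + 4 * u * s) / s^2 := by
    rw [hAk]; field_simp
  have hsq : Real.sqrt ((u / s - k)^2 + 4 * (u / s)) = D / s := by
    rw [harg, hDdef, Real.sqrt_div hargnn, Real.sqrt_sq hs0.le]
  have huAs : u / s - k = A / s := by rw [hAk]; field_simp
  rw [hsq, huAs]
  have key : (A + D) * (D - A) = 4 * u * s := by nlinarith [hD2]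
  have h1 : D / s - A / s = (D - A) / s := by ring
  rw [h1, div_div_eq_mul_div, div_eq_iff hDA.ne']
  nlinarith [key]
end

section
/- Let λ > 0 and β > 0 with 2λβ² ≥ 1. Then for u ≥ 0, there exists a ≥ 0 satisfying the transformed-ℓ¹ stationarity equation a + λβ/(1 + βa)² = u if and only if u ≥ 3·(λ/(4β))^{1/3} − 1/β. -/
/-!
Put `t = (2λβ²)^{1/3}` and `s = 1 + βa`. Then `λβ = t³/(2β)` and the left-hand side equals
`(2s³ + t³)/(2βs²) - 1/β`, which is at least `(3t - 2)/(2β)` by `2s³ + t³ - 3ts² = (s - t)²(2s + t) ≥ 0`,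
with equality at `s = t`. Since `(λ/(4β))^{1/3} = t/(2β)`, this bound is the threshold of the theorem.
The hypothesis `2λβ² ≥ 1` makes `t ≥ 1`, so the minimiser `a = (t - 1)/β` is admissible, and the
intermediate value theorem on `[(t - 1)/β, u]` reaches every larger `u`, as the left-hand side is `≥ a`.
-/

open Set

lemma three_mul_mul_sq_le_two_mul_pow_three_add_pow_three {s t : ℝ} (hs : 0 ≤ s) (ht : 0 ≤ t) :
    3 * t * s ^ 2 ≤ 2 * s ^ 3 + t ^ 3 := by
  nlinarith [mul_nonneg (sq_nonneg (s - t)) (by linarith : 0 ≤ 2 * s + t)]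

lemma rpow_one_third_eq_of_pow_three_eq {x y : ℝ} (hy : 0 ≤ y) (h : y ^ 3 = x) :
    x ^ ((1 : ℝ) / 3) = y := by
  rw [← h, one_div]
  exact_mod_cast Real.pow_rpow_inv_natCast hy three_ne_zero

section Stationarity

variable {lam β t : ℝ}

lemma div_le_stationarity_lhs (hβ : 0 < β) (ht : 0 ≤ t) (htl : t ^ 3 = 2 * lam * β ^ 2)
    {a : ℝ} (ha : 0 ≤ a) : (3 * t - 2) / (2 * β) ≤ a + lam * β / (1 + β * a) ^ 2 := by
  set s := 1 + β * a with hs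
  have hs0 : 0 < s := by positivity
  have hgap : a + lam * β / s ^ 2 - (3 * t - 2) / (2 * β)
      = (2 * s ^ 3 + t ^ 3 - 3 * t * s ^ 2) / (2 * β * s ^ 2) := by
    field_simp
    linear_combination (2 * s ^ 2) * hs - htl
  have := three_mul_mul_sq_le_two_mul_pow_three_add_pow_three hs0.le ht
  rw [← sub_nonneg, hgap]
  exact div_nonneg (by linarith) (by positivity)

lemma stationarity_lhs_at_minimizer (hβ : 0 < β) (ht : 0 < t) (htl : t ^ 3 = 2 * lam * β ^ 2) :
    (t - 1) / β + lam * β / (1 + β * ((t - 1) / β)) ^ 2 = (3 * t - 2) / (2 * β) := by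
  have hs : 1 + β * ((t - 1) / β) = t := by field_simp; ring
  rw [hs]
  field_simp
  linear_combination -htl

lemma exists_nonneg_stationary_of_le (hβ : 0 < β) (ht : 1 ≤ t) (htl : t ^ 3 = 2 * lam * β ^ 2)
    {u : ℝ} (hu : (3 * t - 2) / (2 * β) ≤ u) :
    ∃ a : ℝ, 0 ≤ a ∧ a + lam * β / (1 + β * a) ^ 2 = u := by
  let f : ℝ → ℝ := fun a => a + lam * β / (1 + β * a) ^ 2
  have hmin_nonneg : 0 ≤ (t - 1) / β := div_nonneg (by linarith) hβ.le
  have hmin_le : (t - 1) / β ≤ u :=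
    calc (t - 1) / β ≤ (3 * t - 2) / (2 * β) := by
          rw [div_le_div_iff₀ hβ (by positivity)]; nlinarith
      _ ≤ u := hu
  have hcont : ContinuousOn f (Icc ((t - 1) / β) u) := by
    refine continuousOn_id.add (continuousOn_const.div (by fun_prop) fun a ha => ?_)
    have : 0 ≤ a := hmin_nonneg.trans ha.1
    positivity
  have hlamβ : 0 ≤ lam * β := by
    rw [show lam * β = t ^ 3 / (2 * β) by field_simp; linear_combination -htl]
    positivity
  have hu_mem : u ∈ Icc (f ((t - 1) / β)) (f u) :=
    ⟨by rwa [show f ((t - 1) / β) = _ from stationarity_lhs_at_minimizer hβ (by linarith) htl],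
      le_add_of_nonneg_right (by positivity)⟩
  obtain ⟨a, ha, hfa⟩ := intermediate_value_Icc hmin_le hcont hu_mem
  exact ⟨a, hmin_nonneg.trans ha.1, hfa⟩

end Stationarity

theorem transformed_l1_solvability_general (lam β : ℝ) (hβ : 0 < β)
    (hcond : 1 ≤ 2 * lam * β^2) :
    ∀ u : ℝ, 0 ≤ u →
      ((∃ a : ℝ, 0 ≤ a ∧ a + lam * β / (1 + β * a)^2 = u) ↔
        3 * (lam / (4 * β)) ^ ((1:ℝ)/3) - 1/β ≤ u) := by
  intro u _
  set t := (2 * lam * β ^ 2) ^ ((1 : ℝ) / 3) with ht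
  have ht0 : 0 ≤ t := Real.rpow_nonneg (by linarith) _
  have htl : t ^ 3 = 2 * lam * β ^ 2 := by
    rw [ht, one_div]; exact_mod_cast Real.rpow_inv_natCast_pow (by linarith) three_ne_zero
  have ht1 : 1 ≤ t := (one_le_pow_iff_of_nonneg ht0 three_ne_zero).mp (htl ▸ hcond)
  have hthreshold : 3 * (lam / (4 * β)) ^ ((1 : ℝ) / 3) - 1 / β = (3 * t - 2) / (2 * β) := by
    rw [rpow_one_third_eq_of_pow_three_eq (y := t / (2 * β)) (by positivity)
      (by field_simp; linear_combination 4 * htl)]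
    field_simp
  rw [hthreshold]
  exact ⟨fun ⟨a, ha, hau⟩ => hau ▸ div_le_stationarity_lhs hβ ht0 htl ha,
    exists_nonneg_stationary_of_le hβ ht1 htl⟩

/-- For `λ > 0` and `β > 0` with `2λβ² ≥ 1`, and for any input
`u ≥ 0`, the transformed-ℓ¹ stationarity equation `a + λβ/(1 + βa)² = u` has a
nonnegative solution `a` if and only if `u ≥ 3(λ/(4β))^{1/3} − 1/β`. -/
theorem transformed_l1_solvability (lam β : ℝ) (hlam : 0 < lam) (hβ : 0 < β)
    (hcond : 1 ≤ 2 * lam * β^2) :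
    ∀ u : ℝ, 0 ≤ u →
      ((∃ a : ℝ, 0 ≤ a ∧ a + lam * β / (1 + β * a)^2 = u) ↔
        3 * (lam / (4 * β)) ^ ((1:ℝ)/3) - 1/β ≤ u) :=
  transformed_l1_solvability_general lam β hβ hcond
end

section
/- Let λ > 0 and ε > 0. For every u ∈ ℝ, the piecewise value T(u), defined by T(u) = ε·u/(ε + λ) if |u| ≤ ε + λ and T(u) = u·(1 − λ/|u|) if |u| > ε + λ, is the unique minimizer over a ∈ ℝ of the function f(a) = (1/2)(u − a)² + λ·H_ε(a). -/
/-!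
`H_ε` is convex and differentiable with derivative `t / max ε |t|`, and the piecewise value `T`
satisfies the optimality condition `u - T = λ H_ε'(T)`. The tangent-line inequality for `H_ε` at
`T`, added to the exact expansion of `(1/2)(u - a)²` around `T`, leaves a surplus of
`(1/2)(a - T)² > 0` for every `a ≠ T`.
-/

noncomputable section

def huber (ε a : ℝ) : ℝ := if |a| ≤ ε then a ^ 2 / (2 * ε) else |a| - ε / 2

/-- `t / ε` on `[-ε, ε]` and `sign t` outside. -/
def huberDeriv (ε t : ℝ) : ℝ := t / max ε |t|

def huberActivation (lam ε u : ℝ) : ℝ :=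
  if |u| ≤ ε + lam then ε * u / (ε + lam) else u * (1 - lam / |u|)

end

theorem abs_sub_half_le_huber {ε : ℝ} (hε : 0 < ε) (a : ℝ) : |a| - ε / 2 ≤ huber ε a := by
  unfold huber
  split_ifs
  · rw [le_div_iff₀ (by positivity)]
    nlinarith [sq_abs a, sq_nonneg (|a| - ε)]
  · rfl

theorem huber_add_huberDeriv_mul_le {ε : ℝ} (hε : 0 < ε) (t a : ℝ) :
    huber ε t + huberDeriv ε t * (a - t) ≤ huber ε a := by
  have hta : t * a ≤ |t| * |a| := by rw [← abs_mul]; exact le_abs_self _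
  rcases le_or_gt |t| ε with ht | ht
  · rw [huberDeriv, max_eq_left ht, huber, if_pos ht]
    unfold huber
    split_ifs with ha
    · have hsq : 0 ≤ (a - t) ^ 2 / (2 * ε) := by positivity
      have hd : a ^ 2 / (2 * ε) - (t ^ 2 / (2 * ε) + t / ε * (a - t)) = (a - t) ^ 2 / (2 * ε) := by
        field_simp; ring
      linarith
    · rw [← sub_nonneg]
      have hprod : 0 ≤ (ε - |t|) * (2 * |a| - ε - |t|) :=
        mul_nonneg (sub_nonneg.2 ht) (by linarith)
      have hd : |a| - ε / 2 - (t ^ 2 / (2 * ε) + t / ε * (a - t)) =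
          ((ε - |t|) * (2 * |a| - ε - |t|) + 2 * (|t| * |a| - t * a)) / (2 * ε) := by
        field_simp; linear_combination -sq_abs t
      rw [hd]
      exact div_nonneg (by linarith) (by positivity)
  · have ht0 : 0 < |t| := hε.trans ht
    rw [huberDeriv, max_eq_right ht.le, huber, if_neg ht.not_ge]
    have hlin : t / |t| * (a - t) ≤ |a| - |t| := by
      rw [div_mul_eq_mul_div, div_le_iff₀ ht0, mul_sub, ← sq, ← sq_abs t]
      nlinarith
    linarith [abs_sub_half_le_huber hε a]

theorem sub_huberActivation_eq_mul_huberDeriv {lam ε : ℝ} (hlam : 0 ≤ lam) (hε : 0 < ε) (u : ℝ) :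
    u - huberActivation lam ε u = lam * huberDeriv ε (huberActivation lam ε u) := by
  have hsum : 0 < ε + lam := by linarith
  unfold huberActivation
  split_ifs with hu
  · have hT : |ε * u / (ε + lam)| ≤ ε := by
      rw [abs_div, abs_mul, abs_of_pos hε, abs_of_pos hsum, div_le_iff₀ hsum]
      nlinarith [abs_nonneg u]
    rw [huberDeriv, max_eq_left hT]
    field_simp; ring
  · have hu0 : 0 < |u| := by linarith [abs_nonneg u]
    have hT : |u * (1 - lam / |u|)| = |u| - lam := by
      rw [abs_mul, abs_of_nonneg (a := 1 - lam / |u|) (by rw [sub_nonneg, div_le_one hu0]; linarith)]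
      field_simp
    have hne : |u| - lam ≠ 0 := by linarith
    rw [huberDeriv, hT, max_eq_right (by linarith)]
    field_simp
    ring

theorem half_sq_sub_add_mul_lt_of_subgradient {φ : ℝ → ℝ} {lam u t g : ℝ} (hlam : 0 ≤ lam)
    (hg : ∀ a, φ t + g * (a - t) ≤ φ a) (hu : u - t = lam * g) {a : ℝ} (ha : a ≠ t) :
    1 / 2 * (u - t) ^ 2 + lam * φ t < 1 / 2 * (u - a) ^ 2 + lam * φ a := by
  have hsq : 0 < (a - t) ^ 2 := by positivity [sub_ne_zero.2 ha]
  have hφ := mul_le_mul_of_nonneg_left (hg a) hlam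
  calc 1 / 2 * (u - t) ^ 2 + lam * φ t
      < 1 / 2 * (u - t) ^ 2 + lam * φ t + 1 / 2 * (a - t) ^ 2 := by linarith
    _ = 1 / 2 * (u - a) ^ 2 + lam * (φ t + g * (a - t)) := by
        rw [mul_add, ← mul_assoc, ← hu]; ring
    _ ≤ 1 / 2 * (u - a) ^ 2 + lam * φ a := by linarith

/-- For `λ, ε > 0` and every `u ∈ ℝ`, the Huber activation value
`T(u)` (equal to `εu/(ε + λ)` for `|u| ≤ ε + λ` and to `u(1 − λ/|u|)` for
`|u| > ε + λ`) is the unique minimizer over `a ∈ ℝ` of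
`f(a) = (1/2)(u − a)² + λ·H_ε(a)`, where `H_ε` is the Huber cost. -/
theorem huber_activation_unique_minimizer (lam ε : ℝ)
    (hlam : 0 < lam) (hε : 0 < ε) (u : ℝ)
    (T : ℝ)
    (hT : T = if |u| ≤ ε + lam then ε * u / (ε + lam) else u * (1 - lam / |u|)) :
    ∀ a : ℝ, a ≠ T →
      (1/2) * (u - T)^2 + lam * (if |T| ≤ ε then T^2 / (2*ε) else |T| - ε/2) <
      (1/2) * (u - a)^2 + lam * (if |a| ≤ ε then a^2 / (2*ε) else |a| - ε/2) := by
  intro a ha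
  change T = huberActivation lam ε u at hT
  change _ + lam * huber ε T < _ + lam * huber ε a
  refine half_sq_sub_add_mul_lt_of_subgradient hlam.le (huber_add_huberDeriv_mul_le hε T) ?_ ha
  rw [hT]
  exact sub_huberActivation_eq_mul_huberDeriv hlam.le hε u
end

section
/- Let λ > 0 and u > λ, and set a* := (u² − λ²)/u. Then 0 < a* < u and a* satisfies the stationarity equation for the amplitude scale invariant Bayes cost: u − a* = (√(a*² + 4λ²) − a*)/2; equivalently a* + λ·C′(a*) = u where C′(a) = −a/(2λ) + √(a² + 4λ²)/(2λ). -/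
/-- For `λ > 0` and `u > λ`, the value `a* = (u² − λ²)/u`
satisfies `0 < a* < u` and the stationarity equation for the amplitude scale
invariant Bayes cost: `u − a* = (√(a*² + 4λ²) − a*)/2`, equivalently
`λ·C′(a*) + a* = u` with `C′(a) = −a/(2λ) + √(a² + 4λ²)/(2λ)`. -/
theorem scale_invariant_bayes_stationarity (lam u : ℝ)
    (hlam : 0 < lam) (hu : lam < u)
    (a : ℝ) (ha : a = (u^2 - lam^2) / u) :
    0 < a ∧ a < u ∧
    u - a = (Real.sqrt (a^2 + 4 * lam^2) - a) / 2 ∧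
    lam * (-a / (2 * lam) + Real.sqrt (a^2 + 4 * lam^2) / (2 * lam)) + a = u := by
  have hu0 : 0 < u := hlam.trans hu
  have hsq : Real.sqrt (a^2 + 4 * lam^2) = (u^2 + lam^2) / u := by
    rw [show a^2 + 4 * lam^2 = ((u^2 + lam^2) / u)^2 by
      rw [ha]; field_simp; ring]
    exact Real.sqrt_sq (by positivity)
  have hlt : a < u := by
    rw [ha, div_lt_iff₀ hu0]; nlinarith
  refine ⟨?_, hlt, ?_, ?_⟩
  · rw [ha]; apply div_pos (by nlinarith) hu0
  · rw [hsq, ha]; field_simp; ring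
  · rw [hsq, ha]; field_simp; ring
end

section
/- Let V be a finite-dimensional real inner product space (e.g., Euclidean space ℝⁿ), λ > 0 and u ∈ V. Then the block soft-thresholding value T_λ(u), defined by T_λ(u) = 0 if ‖u‖ ≤ λ and T_λ(u) = u·(1 − λ/‖u‖) if ‖u‖ > λ, is the unique minimizer over a ∈ V of the function f(a) = (1/2)‖u − a‖² + λ‖a‖. -/
/-! The residual `g = u - T` is a subgradient of `λ‖·‖` at `T`: `‖g‖ ≤ λ` and `⟪g, T⟫ = λ‖T‖`.
Expanding `½‖u - a‖²` around `T` then gives `f a ≥ f T + ½‖a - T‖²` for every `a`, which is strict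
as soon as `a ≠ T`. -/

open RealInnerProductSpace

section

variable {V : Type*} [NormedAddCommGroup V] [InnerProductSpace ℝ V]

theorem inner_sub_le_of_norm_le_of_inner_eq {g x : V} {lam : ℝ} (hg : ‖g‖ ≤ lam)
    (hgx : ⟪g, x⟫ = lam * ‖x‖) (y : V) : ⟪g, y - x⟫ ≤ lam * ‖y‖ - lam * ‖x‖ := by
  rw [inner_sub_right, hgx]
  have := (real_inner_le_norm g y).trans (mul_le_mul_of_nonneg_right hg (norm_nonneg y))
  linarith

theorem half_norm_sub_sq_add_mul_norm_le {u x : V} {lam : ℝ} (hg : ‖u - x‖ ≤ lam)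
    (hgx : ⟪u - x, x⟫ = lam * ‖x‖) (a : V) :
    (1/2) * ‖u - x‖^2 + lam * ‖x‖ + (1/2) * ‖a - x‖^2 ≤ (1/2) * ‖u - a‖^2 + lam * ‖a‖ := by
  have hexpand : ‖u - a‖^2 = ‖u - x‖^2 - 2 * ⟪u - x, a - x⟫ + ‖a - x‖^2 := by
    rw [← norm_sub_sq_real, sub_sub_sub_cancel_right]
  have := inner_sub_le_of_norm_le_of_inner_eq hg hgx a
  linarith

noncomputable def blockSoftThreshold (lam : ℝ) (u : V) : V :=
  if ‖u‖ ≤ lam then 0 else (1 - lam / ‖u‖) • u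

theorem sub_blockSoftThreshold_of_lt {lam : ℝ} {u : V} (h : lam < ‖u‖) :
    u - blockSoftThreshold lam u = (lam / ‖u‖) • u := by
  rw [blockSoftThreshold, if_neg h.not_ge, sub_smul, one_smul, sub_sub_cancel]

theorem norm_sub_blockSoftThreshold_le {lam : ℝ} (hlam : 0 ≤ lam) (u : V) :
    ‖u - blockSoftThreshold lam u‖ ≤ lam := by
  rcases le_or_gt ‖u‖ lam with h | h
  · simp [blockSoftThreshold, h]
  · have hu : 0 < ‖u‖ := hlam.trans_lt h
    rw [sub_blockSoftThreshold_of_lt h, norm_smul, Real.norm_of_nonneg (by positivity),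
      div_mul_cancel₀ _ hu.ne']

theorem inner_sub_blockSoftThreshold_self {lam : ℝ} (hlam : 0 ≤ lam) (u : V) :
    ⟪u - blockSoftThreshold lam u, blockSoftThreshold lam u⟫ =
      lam * ‖blockSoftThreshold lam u‖ := by
  rcases le_or_gt ‖u‖ lam with h | h
  · simp [blockSoftThreshold, h]
  · have hu : 0 < ‖u‖ := hlam.trans_lt h
    have hc : 0 ≤ 1 - lam / ‖u‖ := sub_nonneg.mpr ((div_le_one hu).mpr h.le)
    rw [sub_blockSoftThreshold_of_lt h, blockSoftThreshold, if_neg h.not_ge, real_inner_smul_left,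
      real_inner_smul_right, real_inner_self_eq_norm_sq, norm_smul, Real.norm_of_nonneg hc]
    field_simp

end

theorem block_soft_threshold_unique_minimizer_general {V : Type*}
    [NormedAddCommGroup V] [InnerProductSpace ℝ V]
    (lam : ℝ) (hlam : 0 < lam) (u : V)
    (T : V) (hT : T = if ‖u‖ ≤ lam then 0 else (1 - lam / ‖u‖) • u) :
    ∀ a : V, a ≠ T →
      (1/2) * ‖u - T‖^2 + lam * ‖T‖ < (1/2) * ‖u - a‖^2 + lam * ‖a‖ := by
  intro a ha
  replace hT : T = blockSoftThreshold lam u := hT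
  have hbound := half_norm_sub_sq_add_mul_norm_le (hT ▸ norm_sub_blockSoftThreshold_le hlam.le u)
    (hT ▸ inner_sub_blockSoftThreshold_self hlam.le u) a
  have hgap : 0 < ‖a - T‖ := norm_pos_iff.mpr (sub_ne_zero.mpr ha)
  nlinarith

/-- In a finite-dimensional real inner product space, for `λ > 0`
and `u`, the block soft-thresholding value `T_λ(u)` (zero if `‖u‖ ≤ λ` and
`(1 − λ/‖u‖)·u` if `‖u‖ > λ`) is the unique minimizer over `a` of
`f(a) = (1/2)‖u − a‖² + λ‖a‖`. -/
theorem block_soft_threshold_unique_minimizer {V : Type*}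
    [NormedAddCommGroup V] [InnerProductSpace ℝ V] [FiniteDimensional ℝ V]
    (lam : ℝ) (hlam : 0 < lam) (u : V)
    (T : V) (hT : T = if ‖u‖ ≤ lam then 0 else (1 - lam / ‖u‖) • u) :
    ∀ a : V, a ≠ T →
      (1/2) * ‖u - T‖^2 + lam * ‖T‖ < (1/2) * ‖u - a‖^2 + lam * ‖a‖ :=
  block_soft_threshold_unique_minimizer_general lam hlam u T hT
end
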